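/- The metric space M₁ has the strong long trapezoid property (SLTP). In fact, for every finite subset N of M₁ there exist u, v ∈ M₁ with u ≠ v such that d(x,y) + d(u,v) ≤ d(x,u) + d(y,v) for all x, y ∈ N, and d(x,y) + d(z,w) + 2·d(u,v) ≤ d(x,u) + d(y,u) + d(z,v) + d(w,v) for all x, y, z, w ∈ N. -/
import Mathlib



/-- Build a metric space from a distance function which vanishes on the diagonal and takes
values in `[1,2]` off the diagonal (the triangle inequality is then automatic). -/
noncomputable def MetricSpace.ofOneTwo {α : Type*} (D : α → α → ℝ)
    (hself : ∀ x, D x x = 0) (hsymm : ∀ x y, D x y = D y x)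
    (hlow : ∀ x y, x ≠ y → 1 ≤ D x y) (hhigh : ∀ x y, D x y ≤ 2) : MetricSpace α :=
  { dist := D
    dist_self := hself
    dist_comm := hsymm
    dist_triangle := by
      intro x y z
      show D x z ≤ D x y + D y z
      rcases eq_or_ne x y with rfl | hxy
      · simp [hself]
      rcases eq_or_ne y z with rfl | hyz
      · simp [hself]
      have h1 := hlow x y hxy
      have h2 := hlow y z hyz
      have h3 := hhigh x z
      linarith
    eq_of_dist_eq_zero := by
      intro x y hxy
      replace hxy : D x y = 0 := hxy
      by_contra h
      have := hlow x y h
      linarith }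

/-- The points of the metric space `M₁`. -/
inductive M1 where
  | a : ℕ → M1
  | b : ℕ → M1
  | c : ℕ → M1
deriving DecidableEq

namespace M1

/-- The index `k` of a point `a k`, `b k`, or `c k`. -/
def idx : M1 → ℕ
  | .a k => k
  | .b k => k
  | .c k => k

/-- Whether a point of `M₁` is of the form `b k`. -/
def isB : M1 → Prop
  | .b _ => True
  | _ => False

/-- One-sided description of the pairs of points of `M₁` at distance `2`:
`d(a_k, c_k) = 2`, and `d(x, b_l) = 2` whenever `x ∈ {a_k, b_k, c_k}` with `k < l`. -/
def two : M1 → M1 → Prop := fun p q =>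
  (∃ k, p = .a k ∧ q = .c k) ∨ (q.isB ∧ p.idx < q.idx)

/-- The distance on `M₁`: `0` on the diagonal, `2` on the pairs described by `M1.two`
(in either order), and `1` otherwise. -/
noncomputable def D (p q : M1) : ℝ :=
  open scoped Classical in
  if p = q then 0 else if two p q ∨ two q p then 2 else 1

noncomputable instance : MetricSpace M1 :=
  MetricSpace.ofOneTwo D
    (fun x => by simp [D])
    (fun x y => by
      rcases eq_or_ne x y with rfl | h
      · rfl
      · rw [D, D, if_neg h, if_neg (Ne.symm h)]
        rcases em (two x y ∨ two y x) with h2 | h2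
        · rw [if_pos h2, if_pos h2.symm]
        · rw [if_neg h2, if_neg fun hc => h2 hc.symm])
    (fun x y h => by rw [D, if_neg h]; split_ifs <;> norm_num)
    (fun x y => by rw [D]; split_ifs <;> norm_num)

end M1

/-- A metric space `M` has the *strong long trapezoid property* (SLTP). -/
def SLTP (M : Type*) [MetricSpace M] : Prop :=
  ∀ ε : ℝ, 0 < ε → ∀ N : Set M, N.Finite → ∃ u v : M, u ≠ v ∧
    (∀ x ∈ N, ∀ y ∈ N,
      (1 - ε) * (dist x y + dist u v) ≤ dist x u + dist y v) ∧
    (∀ x ∈ N, ∀ y ∈ N, ∀ z ∈ N, ∀ w ∈ N,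
      (1 - ε) * (dist x y + dist z w + 2 * dist u v) ≤
        dist x u + dist y u + dist z v + dist w v)

lemma M1.dist_le_two (x y : M1) : dist x y ≤ 2 := by
  show M1.D x y ≤ 2
  rw [M1.D]; split_ifs <;> norm_num

lemma M1.dist_b (x : M1) (l : ℕ) (h : x.idx < l) : dist x (M1.b l) = 2 := by
  have hne : x ≠ M1.b l := by
    intro he; rw [he] at h; simp [M1.idx] at h
  show M1.D x (M1.b l) = 2
  have ht : M1.two x (M1.b l) := Or.inr ⟨trivial, h⟩
  rw [M1.D, if_neg hne, if_pos (Or.inl ht)]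

lemma M1_strong :
    ∀ N : Set M1, N.Finite → ∃ u v : M1, u ≠ v ∧
      (∀ x ∈ N, ∀ y ∈ N, dist x y + dist u v ≤ dist x u + dist y v) ∧
      (∀ x ∈ N, ∀ y ∈ N, ∀ z ∈ N, ∀ w ∈ N,
        dist x y + dist z w + 2 * dist u v ≤
          dist x u + dist y u + dist z v + dist w v) := by
  intro N hN
  set l : ℕ := hN.toFinset.sup M1.idx + 1 with hl
  have hlt : ∀ x ∈ N, x.idx < l := by
    intro x hx
    have : x.idx ≤ hN.toFinset.sup M1.idx :=
      Finset.le_sup (hN.mem_toFinset.mpr hx)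
    omega
  refine ⟨M1.b l, M1.b (l + 1), ?_, ?_, ?_⟩
  · intro he
    have : l = l + 1 := congrArg M1.idx he
    omega
  · intro x hx y hy
    have h1 : dist x (M1.b l) = 2 := M1.dist_b x l (hlt x hx)
    have h2 : dist y (M1.b (l + 1)) = 2 := M1.dist_b y (l + 1) (by have := hlt y hy; omega)
    have h3 : dist (M1.b l) (M1.b (l + 1)) = 2 :=
      M1.dist_b (M1.b l) (l + 1) (by simp [M1.idx])
    have h4 := M1.dist_le_two x y
    rw [h1, h2, h3]; linarith
  · intro x hx y hy z hz w hw
    have h1 : dist x (M1.b l) = 2 := M1.dist_b x l (hlt x hx)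
    have h2 : dist y (M1.b l) = 2 := M1.dist_b y l (hlt y hy)
    have h3 : dist z (M1.b (l + 1)) = 2 := M1.dist_b z (l + 1) (by have := hlt z hz; omega)
    have h4 : dist w (M1.b (l + 1)) = 2 := M1.dist_b w (l + 1) (by have := hlt w hw; omega)
    have h5 : dist (M1.b l) (M1.b (l + 1)) = 2 :=
      M1.dist_b (M1.b l) (l + 1) (by simp [M1.idx])
    have h6 := M1.dist_le_two x y
    have h7 := M1.dist_le_two z w
    rw [h1, h2, h3, h4, h5]; linarith

/-- `M₁` has the SLTP; in fact, for every finite subset `N` of `M₁` there are `u ≠ v`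
satisfying the (ε-free) long trapezoid inequalities for all points of `N`. -/
theorem M1_SLTP :
    SLTP M1 ∧
    ∀ N : Set M1, N.Finite → ∃ u v : M1, u ≠ v ∧
      (∀ x ∈ N, ∀ y ∈ N, dist x y + dist u v ≤ dist x u + dist y v) ∧
      (∀ x ∈ N, ∀ y ∈ N, ∀ z ∈ N, ∀ w ∈ N,
        dist x y + dist z w + 2 * dist u v ≤
          dist x u + dist y u + dist z v + dist w v) := by
  refine ⟨?_, M1_strong⟩
  intro ε hε N hN
  obtain ⟨u, v, hne, h1, h2⟩ := M1_strong N hN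
  refine ⟨u, v, hne, ?_, ?_⟩
  · intro x hx y hy
    have := h1 x hx y hy
    nlinarith [dist_nonneg (x := x) (y := y), dist_nonneg (x := u) (y := v)]
  · intro x hx y hy z hz w hw
    have := h2 x hx y hy z hz w hw
    nlinarith [dist_nonneg (x := x) (y := y), dist_nonneg (x := z) (y := w),
      dist_nonneg (x := u) (y := v)]
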